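/- Let G be a strongly connected Eulerian digraph. A chip-distribution x on G is non-terminating if and only if there exists a turnback arc set T of G and a chip-distribution a ≥ 0 such that x ∼ ρ + a, where ρ is the indegree vector of the digraph (V, T). -/

import Mathlib

open Finset

variable {V : Type} [Fintype V] [DecidableEq V]

/-- The outdegree of a vertex `v` in the multidigraph with multiplicity function `m`
(`m u v` is the number of directed edges from `u` to `v`). -/
def outdeg (m : V → V → ℕ) (v : V) : ℤ := ∑ u, (m v u : ℤ)

/-- The indegree of a vertex. -/
def indeg (m : V → V → ℕ) (v : V) : ℤ := ∑ u, (m u v : ℤ)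

/-- The digraph is loopless. -/
def Loopless (m : V → V → ℕ) : Prop := ∀ v, m v v = 0

/-- The digraph is strongly connected: every vertex reaches every vertex on a directed path. -/
def StronglyConnected (m : V → V → ℕ) : Prop :=
  ∀ u v : V, Relation.ReflTransGen (fun a b => 0 < m a b) u v

/-- Firing vertex `v` in chip-distribution `x`: `v` sends a chip along each outgoing edge. -/
def fire (m : V → V → ℕ) (x : V → ℤ) (v : V) : V → ℤ :=
  fun u => x u + (m v u : ℤ) - (if u = v then outdeg m v else 0)

/-- The degree (total number of chips) of a chip-distribution / divisor. -/
def degSum (x : V → ℤ) : ℤ := ∑ v, x v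

/-- The state of the chip-firing game after `n` steps, starting from `x` and
firing the vertices `s 0, s 1, …` in this order. -/
def gameState (m : V → V → ℕ) (x : V → ℤ) (s : ℕ → V) : ℕ → (V → ℤ)
  | 0 => x
  | n + 1 => fire m (gameState m x s n) (s n)

/-- `s` encodes an infinite legal chip-firing game starting from `x`:
at each step the fired vertex is active. -/
def InfGame (m : V → V → ℕ) (x : V → ℤ) (s : ℕ → V) : Prop :=
  ∀ n, outdeg m (s n) ≤ gameState m x s n (s n)

/-- A chip-distribution is terminating if no infinite legal game starts from it. -/
def Terminating (m : V → V → ℕ) (x : V → ℤ) : Prop :=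
  ¬ ∃ s : ℕ → V, InfGame m x s

/-- The Laplacian of the digraph applied to `z`. -/
def lap (m : V → V → ℕ) (z : V → ℤ) : V → ℤ :=
  fun u => (∑ v, (m v u : ℤ) * z v) - outdeg m u * z u

/-- Linear equivalence: `x ∼ y` iff `x = y + L z` for some integer vector `z`. -/
def LinEquiv (m : V → V → ℕ) (x y : V → ℤ) : Prop :=
  ∃ z : V → ℤ, x = y + lap m z

/-- A multidigraph (given by its multiplicity function) is acyclic if it has no directed cycle,
i.e. no vertex can reach itself by a directed walk of positive length. -/
def AcyclicMul (k : V → V → ℕ) : Prop :=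
  ∀ v : V, ¬ Relation.TransGen (fun a b => 0 < k a b) v v

/-!
Along an infinite game every vertex fires infinitely often: chips are conserved and a vertex
never drops below `min (x v) 0`, so a vertex that stops firing while an in-neighbour keeps firing
would hoard unboundedly many chips, and strong connectivity spreads firing to all vertices.
Once every vertex has fired, orient each edge from the vertex fired last earlier to the one fired
last later; the reversed edges `T` form a turnback arc set, and every vertex holds at least its
`T`-indegree of chips, since it was nonnegative right after its last firing and has received one
chip along each edge of `T` since. Conversely, if `y = ρ_T + a + L c` then a minimiser of `c`
which is a source among the minimisers in the reoriented digraph is active, because the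
graph is Eulerian; firing it keeps `y` in the same class, so the game never stops.
-/

set_option linter.unusedSectionVars false

def reorient (m T : V → V → ℕ) : V → V → ℕ := fun u v => m u v - T u v + T v u

lemma lap_add (m : V → V → ℕ) (z w : V → ℤ) : lap m (z + w) = lap m z + lap m w := by
  funext u
  simp only [lap, Pi.add_apply, mul_add, sum_add_distrib]
  ring

lemma lap_neg (m : V → V → ℕ) (z : V → ℤ) : lap m (-z) = -lap m z := by
  funext u
  simp only [lap, Pi.neg_apply, mul_neg, sum_neg_distrib]
  ring

lemma LinEquiv.symm {m : V → V → ℕ} {x y : V → ℤ} (h : LinEquiv m x y) :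
    LinEquiv m y x := by
  obtain ⟨z, rfl⟩ := h
  exact ⟨-z, by rw [lap_neg, add_neg_cancel_right]⟩

lemma LinEquiv.trans {m : V → V → ℕ} {x y w : V → ℤ} (hxy : LinEquiv m x y)
    (hyw : LinEquiv m y w) : LinEquiv m x w := by
  obtain ⟨z, rfl⟩ := hxy
  obtain ⟨z', rfl⟩ := hyw
  exact ⟨z' + z, by rw [lap_add, add_assoc]⟩

lemma fire_eq_add_lap (m : V → V → ℕ) (y : V → ℤ) (v : V) :
    fire m y v = y + lap m (Pi.single v 1) := by
  funext u
  simp only [fire, lap, Pi.add_apply, Pi.single_apply, mul_ite, mul_one, mul_zero, sum_ite_eq',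
    mem_univ, if_true]
  split_ifs with h
  · subst h
    ring
  · ring

lemma linEquiv_fire (m : V → V → ℕ) (y : V → ℤ) (v : V) : LinEquiv m (fire m y v) y :=
  ⟨Pi.single v 1, fire_eq_add_lap m y v⟩

lemma linEquiv_gameState (m : V → V → ℕ) (x : V → ℤ) (s : ℕ → V) (n : ℕ) :
    LinEquiv m (gameState m x s n) x := by
  induction n with
  | zero => exact ⟨0, by funext u; simp [gameState, lap]⟩
  | succ n ih => exact (linEquiv_fire m _ (s n)).trans ih

lemma degSum_gameState (m : V → V → ℕ) (x : V → ℤ) (s : ℕ → V) (n : ℕ) :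
    degSum (gameState m x s n) = degSum x := by
  induction n with
  | zero => rfl
  | succ n ih =>
    rw [← ih]
    simp only [gameState, degSum, fire, sum_sub_distrib, sum_add_distrib, sum_ite_eq',
      mem_univ, if_true, outdeg]
    ring

lemma lap_apply_eq_sum_of_outdeg_eq_indeg {m : V → V → ℕ} {v : V}
    (hv : outdeg m v = indeg m v) (c : V → ℤ) :
    lap m c v = ∑ u, (m u v : ℤ) * (c u - c v) := by
  simp only [lap, hv, indeg, mul_sub, sum_sub_distrib, sum_mul]

section Acyclic

variable {k : V → V → ℕ}

lemma AcyclicMul.exists_forall_eq_zero (hk : AcyclicMul k) {S : Set V} (hS : S.Nonempty) :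
    ∃ v ∈ S, ∀ u ∈ S, k u v = 0 := by
  let path : V → V → Prop := Relation.TransGen fun a b => 0 < k a b
  have : IsTrans V path := ⟨fun _ _ _ => .trans⟩
  have : Std.Irrefl path := ⟨hk⟩
  obtain ⟨v, hv, hmin⟩ := (Finite.wellFounded_of_trans_of_irrefl path).has_min S hS
  exact ⟨v, hv, fun u hu => Nat.eq_zero_of_not_pos fun h => hmin u hu (.single h)⟩

lemma acyclicMul_of_lt (f : V → ℕ) (hf : ∀ u v, 0 < k u v → f u < f v) : AcyclicMul k := by
  intro v hv
  have hlt : Relation.TransGen (· < ·) (f v) (f v) := hv.lift f hf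
  rw [Relation.transGen_eq_self] at hlt
  exact lt_irrefl _ hlt

lemma acyclicMul_reorient_of_injective {m : V → V → ℕ} (hloop : Loopless m) {f : V → ℕ}
    (hf : Function.Injective f) :
    AcyclicMul (reorient m fun u v => if f v < f u then m u v else 0) := by
  refine acyclicMul_of_lt f fun u v huv => ?_
  simp only [reorient] at huv
  rcases lt_trichotomy (f u) (f v) with h | h | h
  · exact h
  · cases hf h
    simp [hloop u] at huv
  · simp [h, h.not_gt] at huv

end Acyclic

section Backward

variable {m : V → V → ℕ}

lemma exists_legal_of_linEquiv_turnback [Nonempty V] (heul : ∀ v, outdeg m v = indeg m v)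
    {T : V → V → ℕ} (hT : AcyclicMul (reorient m T)) {a : V → ℤ} (ha : 0 ≤ a)
    {y : V → ℤ} (hy : LinEquiv m y (indeg T + a)) : ∃ v, outdeg m v ≤ y v := by
  obtain ⟨c, rfl⟩ := hy
  obtain ⟨v₀, -, hv₀⟩ := exists_min_image univ c univ_nonempty
  obtain ⟨v, hv, hsource⟩ := hT.exists_forall_eq_zero (S := {v | ∀ u, c v ≤ c u})
    ⟨v₀, fun u => hv₀ u (mem_univ u)⟩
  have hterm : ∀ u, (m u v : ℤ) - T u v ≤ m u v * (c u - c v) := by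
    intro u
    rcases (hv u).lt_or_eq with hlt | heq
    · have : (1 : ℤ) ≤ c u - c v := by omega
      nlinarith [Int.natCast_nonneg (T u v), Int.natCast_nonneg (m u v)]
    · have hzero := hsource u fun w => heq ▸ hv w
      simp only [reorient] at hzero
      rw [heq, sub_self, mul_zero]
      omega
  have hlap : ∑ u, ((m u v : ℤ) - T u v) ≤ lap m c v := by
    rw [lap_apply_eq_sum_of_outdeg_eq_indeg (heul v)]
    exact sum_le_sum fun u _ => hterm u
  refine ⟨v, ?_⟩
  simp only [sum_sub_distrib] at hlap
  simp only [Pi.add_apply, heul v, indeg]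
  linarith [show 0 ≤ a v from ha v]

lemma exists_infGame_of_invariant (P : (V → ℤ) → Prop)
    (hP : ∀ y, P y → ∃ v, outdeg m v ≤ y v ∧ P (fire m y v)) {x : V → ℤ} (hx : P x) :
    ∃ s, InfGame m x s := by
  choose next hlegal hnext using hP
  let state : ℕ → {y // P y} := fun n =>
    Nat.rec ⟨x, hx⟩ (fun _ y => ⟨fire m y.1 (next y.1 y.2), hnext y.1 y.2⟩) n
  have hstate : ∀ n, gameState m x (fun n => next _ (state n).2) n = (state n).1 := by
    intro n
    induction n with
    | zero => rfl
    | succ n ih => simp only [gameState, ih]; rfl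
  exact ⟨fun n => next _ (state n).2, fun n => hstate n ▸ hlegal _ (state n).2⟩

end Backward

lemma exists_le_sum_Ico_of_frequently {f : ℕ → ℕ} (hf : ∃ᶠ i in Filter.atTop, 0 < f i)
    (N k : ℕ) : ∃ n ≥ N, k ≤ ∑ i ∈ Ico N n, f i := by
  induction k with
  | zero => exact ⟨N, le_rfl, Nat.zero_le _⟩
  | succ k ih =>
    obtain ⟨n, hNn, hk⟩ := ih
    obtain ⟨j, hnj, hj⟩ := Filter.frequently_atTop.mp hf n
    refine ⟨j + 1, by omega, ?_⟩
    have hmono : ∑ i ∈ Ico N n, f i ≤ ∑ i ∈ Ico N j, f i :=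
      sum_le_sum_of_subset (Ico_subset_Ico_right hnj)
    rw [sum_Ico_succ_top (hNn.trans hnj)]
    omega

section Forward

variable {m : V → V → ℕ} {x : V → ℤ} {s : ℕ → V}

lemma gameState_succ_apply_of_ne {n : ℕ} {u : V} (h : s n ≠ u) :
    gameState m x s (n + 1) u = gameState m x s n u + m (s n) u := by
  simp [gameState, fire, Ne.symm h]

lemma gameState_eq_add_sum_Ico {v : V} {p q : ℕ} (hpq : p ≤ q)
    (hv : ∀ i ∈ Ico p q, s i ≠ v) :
    gameState m x s q v = gameState m x s p v + ∑ i ∈ Ico p q, (m (s i) v : ℤ) := by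
  induction q, hpq using Nat.le_induction with
  | base => simp
  | succ q hpq ih =>
    rw [gameState_succ_apply_of_ne (hv q (by simp; omega)),
      ih fun i hi => hv i (Ico_subset_Ico_right q.le_succ hi), sum_Ico_succ_top hpq, add_assoc]

namespace InfGame

variable (hloop : Loopless m) (hs : InfGame m x s)
include hloop hs

lemma gameState_succ_self_nonneg (n : ℕ) : 0 ≤ gameState m x s (n + 1) (s n) := by
  have := hs n
  simp only [gameState, fire, hloop (s n), if_true]
  omega

lemma min_le_gameState (n : ℕ) (u : V) : min (x u) 0 ≤ gameState m x s n u := by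
  induction n with
  | zero => exact min_le_left _ _
  | succ n ih =>
    by_cases h : s n = u
    · subst h
      exact (min_le_right _ _).trans (gameState_succ_self_nonneg hloop hs n)
    · rw [gameState_succ_apply_of_ne h]
      linarith [Int.natCast_nonneg (m (s n) u)]

lemma gameState_le (n : ℕ) (u : V) :
    gameState m x s n u ≤ degSum x - ∑ w, min (x w) 0 := by
  have hsum := degSum_gameState m x s n
  rw [degSum, ← add_sum_erase _ _ (mem_univ u)] at hsum
  rw [← add_sum_erase _ _ (mem_univ u)]
  have := sum_le_sum fun w (_ : w ∈ univ.erase u) => min_le_gameState hloop hs n w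
  linarith [min_le_right (x u) 0]

lemma frequently_eq_of_edge {u v : V} (hu : ∃ᶠ n in Filter.atTop, s n = u) (huv : 0 < m u v) :
    ∃ᶠ n in Filter.atTop, s n = v := by
  by_contra hv
  obtain ⟨N, hN⟩ := Filter.eventually_atTop.mp (Filter.not_frequently.mp hv)
  have hf : ∃ᶠ i in Filter.atTop, 0 < m (s i) v := hu.mono fun i hi => hi ▸ huv
  obtain ⟨n, hNn, hk⟩ := exists_le_sum_Ico_of_frequently hf N
    (degSum x - ∑ w, min (x w) 0 - gameState m x s N v + 1).toNat
  have hgrow := gameState_eq_add_sum_Ico (m := m) (x := x) hNn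
    fun i hi => hN i (mem_Ico.mp hi).1
  have := gameState_le hloop hs n v
  have := gameState_le hloop hs N v
  rw [Int.toNat_le] at hk
  push_cast at hk
  omega

lemma frequently_eq (hconn : StronglyConnected m) (v : V) : ∃ᶠ n in Filter.atTop, s n = v := by
  obtain ⟨u, hu⟩ : ∃ u, ∃ᶠ n in Filter.atTop, s n = u := by
    by_contra! h
    have := Filter.eventually_all.mpr h
    obtain ⟨n, hn⟩ := this.exists
    exact hn (s n) rfl
  induction hconn u v with
  | refl => exact hu
  | tail _ hbc ih => exact frequently_eq_of_edge hloop hs ih hbc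

lemma exists_turnback_le_gameState {N : ℕ} (hall : ∀ v, ∃ n ≤ N, s n = v) :
    ∃ T : V → V → ℕ, (∀ u v, T u v ≤ m u v) ∧ AcyclicMul (reorient m T) ∧
      indeg T ≤ gameState m x s (N + 1) := by
  let last : V → ℕ := fun v => Nat.findGreatest (fun i => s i = v) N
  have hlast : ∀ v, s (last v) = v := fun v => by
    obtain ⟨n, hn, hsn⟩ := hall v
    exact Nat.findGreatest_spec (P := fun i => s i = v) hn hsn
  have hlast_le : ∀ v, last v ≤ N := fun v => Nat.findGreatest_le N
  have hle_last : ∀ v i, i ≤ N → s i = v → i ≤ last v := fun v _ =>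
    Nat.le_findGreatest (P := fun i => s i = v)
  have hlast_inj : Function.Injective last := fun u v h => by rw [← hlast u, ← hlast v, h]
  refine ⟨fun u v => if last v < last u then m u v else 0,
    fun u v => by dsimp only; split_ifs <;> omega,
    acyclicMul_reorient_of_injective hloop hlast_inj, fun v => ?_⟩
  let later : Finset V := univ.filter fun u => last v < last u
  have hquiet : ∀ i ∈ Ico (last v + 1) (N + 1), s i ≠ v := fun i hi hsi => by
    rw [mem_Ico] at hi
    have := hle_last v i (by omega) hsi
    omega
  have hmaps : later.image last ⊆ Ico (last v + 1) (N + 1) := by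
    intro i hi
    obtain ⟨u, hu, rfl⟩ := mem_image.mp hi
    exact mem_Ico.mpr ⟨(mem_filter.mp hu).2, Nat.lt_succ_of_le (hlast_le u)⟩
  have hreceived := sum_le_sum_of_subset_of_nonneg hmaps
    fun i _ _ => Int.natCast_nonneg (m (s i) v)
  rw [sum_image hlast_inj.injOn] at hreceived
  have hindeg : indeg (fun u v => if last v < last u then m u v else 0) v =
      ∑ u ∈ later, (m (s (last u)) v : ℤ) := by
    simp only [indeg, later, hlast, sum_filter]
    exact sum_congr rfl fun u _ => by split_ifs <;> simp
  have hfire := hlast v ▸ gameState_succ_self_nonneg hloop hs (last v)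
  rw [gameState_eq_add_sum_Ico (by simpa using hlast_le v) hquiet]
  linarith

lemma exists_turnback (hconn : StronglyConnected m) :
    ∃ T : V → V → ℕ, (∀ u v, T u v ≤ m u v) ∧ AcyclicMul (reorient m T) ∧
      ∃ a : V → ℤ, 0 ≤ a ∧ LinEquiv m x (indeg T + a) := by
  choose firing _ hfiring using fun v =>
    Filter.frequently_atTop.mp (frequently_eq hloop hs hconn v) 0
  obtain ⟨T, hTm, hT, hle⟩ := exists_turnback_le_gameState hloop hs (N := univ.sup firing)
    fun v => ⟨firing v, le_sup (mem_univ v), hfiring v⟩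
  refine ⟨T, hTm, hT, gameState m x s (univ.sup firing + 1) - indeg T, sub_nonneg.mpr hle, ?_⟩
  rw [add_sub_cancel]
  exact (linEquiv_gameState m x s _).symm

end InfGame

end Forward

/-- On a strongly connected Eulerian digraph, a chip-distribution `x` is non-terminating
iff `x ∼ ρ + a` for the indegree vector `ρ` of some turnback arc set and some `a ≥ 0`. -/
theorem nonterminating_iff_turnback
    {V : Type} [Fintype V] [DecidableEq V] [Nonempty V]
    (m : V → V → ℕ) (hloop : Loopless m) (hconn : StronglyConnected m)
    (heul : ∀ v, outdeg m v = indeg m v)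
    (x : V → ℤ) :
    ¬ Terminating m x ↔
      ∃ T : V → V → ℕ, (∀ u v, T u v ≤ m u v) ∧
        AcyclicMul (fun u v => m u v - T u v + T v u) ∧
        ∃ a : V → ℤ, 0 ≤ a ∧ LinEquiv m x (fun v => (∑ u, (T u v : ℤ)) + a v) := by
  rw [Terminating, not_not]
  constructor
  · rintro ⟨s, hs⟩
    exact hs.exists_turnback hloop hconn
  · rintro ⟨T, -, hT, a, ha, hx⟩
    exact exists_infGame_of_invariant (fun y => LinEquiv m y (indeg T + a))
      (fun y hy => (exists_legal_of_linEquiv_turnback heul hT ha hy).imp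
        fun v hv => ⟨hv, (linEquiv_fire m y v).trans hy⟩) hx
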